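/- arXiv:2401.17947 — 2 statements merged into one kernel-verified Lean document; each statement's English description precedes it below -/
import Mathlib

section
/- Let F be a spanning forest of the n-by-n grid graph G(n) with exactly i+1 connected components. Then the number of cut edges of F (edges of G(n) joining two distinct components of F) is at least 2(i+1) - 2n. -/
def gridGraph (n : ℕ) : SimpleGraph (Fin n × Fin n) :=
  (SimpleGraph.pathGraph n).boxProd (SimpleGraph.pathGraph n)

/-!
Colour the grid by the components. In a colour class, take a vertex maximal for the product
order: its right neighbour, if it has one, has another colour. This injects the colours into the
horizontal cut edges together with the last column, and symmetrically into the vertical cut edges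
together with the top row. Abstractly: if `σ` is an inflationary self-map of a finite partial
order, each colour class contains a fixed point of `σ` or a vertex `v` with `c (σ v) ≠ c v`,
and the edges `s(v, σ v)` are pairwise distinct.
-/

open Function Set SimpleGraph

namespace SimpleGraph

variable {V γ : Type*}

def edgesAcross (G : SimpleGraph V) (c : V → γ) : Set (Sym2 V) :=
  {e | e ∈ G.edgeSet ∧ ∃ a b, e = s(a, b) ∧ c a ≠ c b}

theorem mk_mem_edgesAcross {G : SimpleGraph V} {c : V → γ} {v w : V} (hvw : G.Adj v w)
    (hc : c v ≠ c w) : s(v, w) ∈ G.edgesAcross c :=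
  ⟨hvw, v, w, rfl, hc⟩

end SimpleGraph

section Inflationary

variable {V γ : Type*} [PartialOrder V] {σ : V → V}

theorem injective_sym2_mk_self_apply (hσ : ∀ v, v ≤ σ v) :
    Injective fun v => s(v, σ v) := by
  intro u v huv
  rcases Sym2.eq_iff.mp huv with ⟨h, -⟩ | ⟨hu, hv⟩
  · exact h
  · exact le_antisymm ((hσ u).trans hv.le) ((hσ v).trans hu.ge)

theorem ncard_range_le_ncard_fixedPoints_add [Finite V] (hσ : ∀ v, v ≤ σ v) (c : V → γ) :
    (range c).ncard ≤ (fixedPoints σ).ncard + {v | c (σ v) ≠ c v}.ncard := by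
  have hsub : range c ⊆ c '' (fixedPoints σ ∪ {v | c (σ v) ≠ c v}) := by
    rintro _ ⟨v₀, rfl⟩
    obtain ⟨v, hv⟩ := (toFinite {v | c v = c v₀}).exists_maximal ⟨v₀, rfl⟩
    refine ⟨v, ?_, hv.1⟩
    by_cases hfix : σ v = v
    · exact Or.inl hfix
    · exact Or.inr fun hc => hfix (le_antisymm (hv.2 (hc.trans hv.1) (hσ v)) (hσ v))
  calc (range c).ncard ≤ _ := ncard_le_ncard hsub
    _ ≤ _ := ncard_image_le
    _ ≤ _ := ncard_union_le _ _

end Inflationary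

theorem Function.fixedPoints_prodMap {α β : Type*} (f : α → α) (g : β → β) :
    fixedPoints (Prod.map f g) = fixedPoints f ×ˢ fixedPoints g :=
  ext isFixedPt_prodMap

open Order

section SuccOrder

variable {α : Type*}

theorem SimpleGraph.hasse_adj_succ [PartialOrder α] [SuccOrder α] {a : α} (h : succ a ≠ a) :
    (hasse α).Adj a (succ a) :=
  hasse_adj.mpr (Or.inl (covBy_succ_of_not_isMax (mt succ_eq_iff_isMax.mpr h)))

theorem subsingleton_fixedPoints_succ [LinearOrder α] [SuccOrder α] :
    (fixedPoints (succ : α → α)).Subsingleton := by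
  intro a ha b hb
  rcases le_total a b with hab | hba
  · exact (succ_eq_iff_isMax.mp ha).eq_of_le hab
  · exact ((succ_eq_iff_isMax.mp hb).eq_of_le hba).symm

end SuccOrder

section Grid

variable {α β γ : Type*}

theorem ncard_fixedPoints_prodMap_succ_id_le [LinearOrder α] [SuccOrder α] [Finite α] :
    (fixedPoints (Prod.map succ id : α × β → α × β)).ncard ≤ Nat.card β := by
  rw [fixedPoints_prodMap, fixedPoints_id, ncard_prod, ncard_univ]
  exact mul_le_of_le_one_left (Nat.zero_le _)
    (ncard_le_one_iff_subsingleton.mpr subsingleton_fixedPoints_succ)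

theorem ncard_fixedPoints_prodMap_id_succ_le [LinearOrder β] [SuccOrder β] [Finite β] :
    (fixedPoints (Prod.map id succ : α × β → α × β)).ncard ≤ Nat.card α := by
  rw [fixedPoints_prodMap, fixedPoints_id, ncard_prod, ncard_univ]
  exact mul_le_of_le_one_right (Nat.zero_le _)
    (ncard_le_one_iff_subsingleton.mpr subsingleton_fixedPoints_succ)

theorem le_prodMap_succ_id [Preorder α] [SuccOrder α] [Preorder β] (v : α × β) :
    v ≤ Prod.map succ id v :=
  Prod.le_def.mpr ⟨le_succ v.1, le_rfl⟩

theorem le_prodMap_id_succ [Preorder α] [Preorder β] [SuccOrder β] (v : α × β) :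
    v ≤ Prod.map id succ v :=
  Prod.le_def.mpr ⟨le_rfl, le_succ v.2⟩

theorem ncard_add_ncard_le_ncard_edgesAcross [PartialOrder α] [SuccOrder α] [PartialOrder β]
    [SuccOrder β] [Finite α] [Finite β] (c : α × β → γ) :
    {v | c (Prod.map succ id v) ≠ c v}.ncard + {v | c (Prod.map id succ v) ≠ c v}.ncard ≤
      (((hasse α).boxProd (hasse β)).edgesAcross c).ncard := by
  have horiz := injective_sym2_mk_self_apply (σ := (Prod.map succ id : α × β → α × β))
    le_prodMap_succ_id
  have vert := injective_sym2_mk_self_apply (σ := (Prod.map id succ : α × β → α × β))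
    le_prodMap_id_succ
  rw [← ncard_image_of_injective _ horiz, ← ncard_image_of_injective _ vert,
    ← ncard_union_eq]
  · refine ncard_le_ncard (union_subset ?_ ?_)
    · rintro _ ⟨v, hv, rfl⟩
      refine mk_mem_edgesAcross (boxProd_adj.mpr (Or.inl ⟨hasse_adj_succ ?_, rfl⟩)) (Ne.symm hv)
      exact fun h => hv (congrArg c (Prod.ext h rfl))
    · rintro _ ⟨v, hv, rfl⟩
      refine mk_mem_edgesAcross (boxProd_adj.mpr (Or.inr ⟨hasse_adj_succ ?_, rfl⟩)) (Ne.symm hv)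
      exact fun h => hv (congrArg c (Prod.ext rfl h))
  · rw [Set.disjoint_left]
    rintro _ ⟨v, hv, rfl⟩ ⟨u, -, huv⟩
    have hv₁ : succ v.1 ≠ v.1 := fun h => hv (congrArg c (Prod.ext h rfl))
    rcases Sym2.eq_iff.mp huv with ⟨rfl, h⟩ | ⟨h₁, h₂⟩
    · exact hv₁ (congrArg Prod.fst h).symm
    · have h : u.1 = v.1 := (Prod.ext_iff.mp h₂).1
      exact hv₁ ((congrArg Prod.fst h₁).symm.trans h)

end Grid

theorem two_mul_ncard_range_le_ncard_edgesAcross {α β γ : Type*}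
    [LinearOrder α] [SuccOrder α] [Finite α] [LinearOrder β] [SuccOrder β] [Finite β]
    (c : α × β → γ) :
    2 * (range c).ncard ≤
      (((hasse α).boxProd (hasse β)).edgesAcross c).ncard + Nat.card α + Nat.card β := by
  have horiz := ncard_range_le_ncard_fixedPoints_add le_prodMap_succ_id c
  have vert := ncard_range_le_ncard_fixedPoints_add le_prodMap_id_succ c
  have := ncard_fixedPoints_prodMap_succ_id_le (α := α) (β := β)
  have := ncard_fixedPoints_prodMap_id_succ_le (α := α) (β := β)
  have := ncard_add_ncard_le_ncard_edgesAcross c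
  omega

theorem stmt_2_general (n i : ℕ) (F : SimpleGraph (Fin n × Fin n))
    (hcomp : Nat.card F.ConnectedComponent = i + 1) :
    (2 * ((i : ℤ) + 1) - 2 * n) ≤
      ({e : Sym2 (Fin n × Fin n) | e ∈ (gridGraph n).edgeSet ∧
        ∃ a b, e = s(a, b) ∧
          F.connectedComponentMk a ≠ F.connectedComponentMk b}.ncard : ℤ) := by
  have hrange : (range F.connectedComponentMk).ncard = i + 1 := by
    rw [range_eq_univ.mpr fun K => K.exists_rep, ncard_univ, hcomp]
  have key : 2 * (i + 1) ≤ ((gridGraph n).edgesAcross F.connectedComponentMk).ncard + n + n := by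
    have := two_mul_ncard_range_le_ncard_edgesAcross F.connectedComponentMk
    rwa [hrange, Nat.card_fin] at this
  change _ ≤ (((gridGraph n).edgesAcross F.connectedComponentMk).ncard : ℤ)
  omega

/-- A spanning forest of the `n`-by-`n` grid graph with exactly `i+1` connected
components has at least `2(i+1) - 2n` cut edges (edges of the grid joining two
distinct components of the forest). -/
theorem stmt_2 (n i : ℕ) (F : SimpleGraph (Fin n × Fin n))
    (hle : F ≤ gridGraph n) (hforest : F.IsAcyclic)
    (hcomp : Nat.card F.ConnectedComponent = i + 1) :
    (2 * ((i : ℤ) + 1) - 2 * n) ≤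
      ({e : Sym2 (Fin n × Fin n) | e ∈ (gridGraph n).edgeSet ∧
        ∃ a b, e = s(a, b) ∧
          F.connectedComponentMk a ≠ F.connectedComponentMk b}.ncard : ℤ) :=
  stmt_2_general n i F hcomp
end

section
/- For the centipede spanning tree T_n of the n-by-n grid (n ≥ 3), the degree-mass function is p_n(d) = 1/(n-1) for each odd d in {3, 5, ..., 2n-1} and p_n(d) = 0 otherwise; consequently, for each fixed d, p_n(d) → 0 as n → ∞, and the associated power series of the centipede family is f(x) = 1 + x. -/
open Filter Set

noncomputable section
open scoped Classical

/-- The centipede spanning tree of the `n`-by-`n` grid: the spine is the full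
row `0` of horizontal edges, and the legs are all vertical edges. -/
def centipede (n : ℕ) : SimpleGraph (Fin n × Fin n) where
  Adj u v :=
    (u.2 = v.2 ∧ ((u.1 : ℕ) + 1 = v.1 ∨ (v.1 : ℕ) + 1 = u.1)) ∨
      ((u.1 : ℕ) = 0 ∧ (v.1 : ℕ) = 0 ∧ ((u.2 : ℕ) + 1 = v.2 ∨ (v.2 : ℕ) + 1 = u.2))
  symm := by
    refine ⟨?_⟩
    rintro u v (⟨h1, h2 | h2⟩ | ⟨h1, h2, h3 | h3⟩) <;> simp_all
  loopless := by
    refine ⟨?_⟩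
    rintro u (⟨h1, h2 | h2⟩ | ⟨h1, h2, h3 | h3⟩) <;> omega

/-- The branch `e` of the spanning tree `T` lies on the fundamental cycle of the
chord `c`, i.e. the endpoints of `c` lie in different components of `T - e`. -/
def onCycle {V : Type*} (T : SimpleGraph V) (e c : Sym2 V) : Prop :=
  ∃ a b, c = s(a, b) ∧ ¬ (T.deleteEdges {e}).Reachable a b

/-- The degree of a chord `c` in the bipartite graph associated to the spanning
tree `T`: the number of branches on its fundamental cycle. -/
def chordDegree {V : Type*} (T : SimpleGraph V) (c : Sym2 V) : ℕ :=
  {e | e ∈ T.edgeSet ∧ onCycle T e c}.ncard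

/-- The degree-mass function: `p d` is the fraction of chords of degree `d`. -/
def degreeMass {V : Type*} (G T : SimpleGraph V) (d : ℕ) : ℝ :=
  ({c | c ∈ G.edgeSet \ T.edgeSet ∧ chordDegree T c = d}.ncard : ℝ) /
    ((G.edgeSet \ T.edgeSet).ncard : ℝ)

/-!
The chords of the centipede are the horizontal grid edges in rows `r ≥ 1`. The fundamental
cycle of the chord in row `r` between columns `k` and `k + 1` runs down leg `k`, across the
spine edge `k`, and up leg `k + 1`, so it contains `2r + 1` tree edges: each of them separates
the chord's endpoints (cutting a leg isolates its part below the cut, cutting the spine edge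
splits the columns `≤ k` from those `> k`), while the path itself shows no other tree edge does.
So each of the `n - 1` rows contributes `n - 1` chords of degree `2r + 1`, whence
`p_n = 1/(n-1)` on the odd `d ∈ [3, 2n - 1]`. These masses tend to `0`, so every limit `p_∞`
vanishes and `f(x) = 1 + x`.
-/

namespace SimpleGraph

variable {V : Type*} {G T : SimpleGraph V}

theorem Reachable.iff_of_adj {P : V → Prop} (hP : ∀ ⦃u v⦄, G.Adj u v → (P u ↔ P v))
    {a b : V} (hab : G.Reachable a b) : P a ↔ P b := by
  obtain ⟨w⟩ := hab
  induction w with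
  | nil => rfl
  | cons huv _ ih => exact (hP huv).trans ih

theorem reachable_zero_last_of_adj {L : ℕ} (f : Fin (L + 1) → V)
    (hf : ∀ t : Fin L, G.Adj (f t.castSucc) (f t.succ)) : G.Reachable (f 0) (f (Fin.last L)) :=
  Fin.induction (motive := fun i => G.Reachable (f 0) (f i)) (Reachable.refl _)
    (fun t ih => ih.trans (hf t).reachable) (Fin.last L)

theorem fromEdgeSet_le_deleteEdges {s : Set (Sym2 V)} {e : Sym2 V} (hs : s ⊆ T.edgeSet)
    (he : e ∉ s) : fromEdgeSet s ≤ T.deleteEdges {e} := by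
  rintro u v ⟨huv, -⟩
  rw [deleteEdges_adj, Set.mem_singleton_iff]
  exact ⟨hs huv, fun h => he (h ▸ huv)⟩

end SimpleGraph

open SimpleGraph

section OnCycle

variable {V : Type*} {T : SimpleGraph V}

theorem onCycle_mk_iff {e : Sym2 V} {a b : V} :
    onCycle T e s(a, b) ↔ ¬(T.deleteEdges {e}).Reachable a b := by
  refine ⟨?_, fun h => ⟨a, b, rfl, h⟩⟩
  rintro ⟨a', b', hab, h⟩
  rcases Sym2.eq_iff.1 hab with ⟨rfl, rfl⟩ | ⟨rfl, rfl⟩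
  exacts [h, fun h' => h h'.symm]

theorem onCycle_of_separates {e : Sym2 V} {a b : V} (P : V → Prop)
    (hP : ∀ ⦃u v⦄, (T.deleteEdges {e}).Adj u v → (P u ↔ P v)) (hab : ¬(P a ↔ P b)) :
    onCycle T e s(a, b) :=
  onCycle_mk_iff.2 fun h => hab (h.iff_of_adj hP)

end OnCycle

theorem ncard_setOf_two_mul_fst_add_three_eq (m d : ℕ) :
    {q : Fin m × Fin m | 2 * q.1 + 3 = d}.ncard =
      if Odd d ∧ 3 ≤ d ∧ d ≤ 2 * m + 1 then m else 0 := by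
  split_ifs with hd
  · obtain ⟨⟨r, rfl⟩, h3, hle⟩ := hd
    have hrow : {q : Fin m × Fin m | 2 * q.1 + 3 = 2 * r + 1} =
        Set.range fun k : Fin m => ((⟨r - 1, by omega⟩ : Fin m), k) := by
      ext ⟨r', k⟩
      simp only [Set.mem_ofPred_eq, Set.mem_range, Prod.ext_iff, Fin.ext_iff]
      exact ⟨fun h => ⟨k, by omega, rfl⟩, fun ⟨_, h, _⟩ => by omega⟩
    rw [hrow, Set.ncard_range_of_injective fun k k' h => (Prod.ext_iff.1 h).2]
    simp
  · suffices h : {q : Fin m × Fin m | 2 * q.1 + 3 = d} = ∅ by rw [h, Set.ncard_empty]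
    refine Set.eq_empty_of_forall_notMem fun (q : Fin m × Fin m) hq => hd ?_
    rw [Set.mem_ofPred_eq] at hq
    exact ⟨⟨q.1 + 1, by omega⟩, by omega, by omega⟩

namespace Centipede

-- Vertices are `(row, column)`; the spine is row `0` and the grid has side `m + 1`.

variable {m : ℕ}

def leg (c : Fin (m + 1)) (i : Fin m) : Sym2 (Fin (m + 1) × Fin (m + 1)) :=
  s((i.castSucc, c), (i.succ, c))

def spine (k : Fin m) : Sym2 (Fin (m + 1) × Fin (m + 1)) :=
  s((0, k.castSucc), (0, k.succ))

def chord (q : Fin m × Fin m) : Sym2 (Fin (m + 1) × Fin (m + 1)) :=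
  s((q.1.succ, q.2.castSucc), (q.1.succ, q.2.succ))

def fundamentalCycle (q : Fin m × Fin m) :
    Fin (q.1 + 1) ⊕ Fin (q.1 + 1) ⊕ Unit → Sym2 (Fin (m + 1) × Fin (m + 1))
  | .inl i => leg q.2.castSucc (Fin.castLE q.1.isLt i)
  | .inr (.inl i) => leg q.2.succ (Fin.castLE q.1.isLt i)
  | .inr (.inr _) => spine q.2

theorem fundamentalCycle_mem_edgeSet (q : Fin m × Fin m)
    (z : Fin (q.1 + 1) ⊕ Fin (q.1 + 1) ⊕ Unit) :
    fundamentalCycle q z ∈ (centipede (m + 1)).edgeSet := by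
  rcases z with i | i | _ <;> simp [fundamentalCycle, leg, spine, centipede]

theorem fundamentalCycle_injective (q : Fin m × Fin m) :
    Function.Injective (fundamentalCycle q) := by
  rintro (i | i | ⟨⟩) (j | j | ⟨⟩) h <;>
    simp only [fundamentalCycle, leg, spine, Sym2.eq_iff, Prod.ext_iff, Fin.ext_iff, Fin.val_succ,
      Fin.val_castSucc, Fin.val_castLE, Fin.val_zero, Sum.inl.injEq, Sum.inr.injEq,
      reduceCtorEq] at h ⊢ <;> omega

theorem leg_separates (c : Fin (m + 1)) (i : Fin m) ⦃u v : Fin (m + 1) × Fin (m + 1)⦄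
    (huv : ((centipede (m + 1)).deleteEdges {leg c i}).Adj u v) :
    (u.2 = c ∧ (i : ℕ) < u.1) ↔ (v.2 = c ∧ (i : ℕ) < v.1) := by
  simp only [deleteEdges_adj, Set.mem_singleton_iff, leg, centipede, Sym2.eq_iff, Prod.ext_iff,
    Fin.ext_iff, Fin.val_succ, Fin.val_castSucc] at huv
  omega

theorem spine_separates (k : Fin m) ⦃u v : Fin (m + 1) × Fin (m + 1)⦄
    (huv : ((centipede (m + 1)).deleteEdges {spine k}).Adj u v) :
    (k : ℕ) < u.2 ↔ (k : ℕ) < v.2 := by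
  simp only [deleteEdges_adj, Set.mem_singleton_iff, spine, centipede, Sym2.eq_iff, Prod.ext_iff,
    Fin.ext_iff, Fin.val_succ, Fin.val_castSucc, Fin.val_zero] at huv
  omega

theorem onCycle_fundamentalCycle (q : Fin m × Fin m)
    (z : Fin (q.1 + 1) ⊕ Fin (q.1 + 1) ⊕ Unit) :
    onCycle (centipede (m + 1)) (fundamentalCycle q z) (chord q) := by
  rcases z with i | i | ⟨⟩
  · refine onCycle_of_separates _ (leg_separates _ _) ?_
    simp [Fin.ext_iff, Nat.lt_succ_iff.1 i.isLt]
  · refine onCycle_of_separates _ (leg_separates _ _) ?_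
    simp [Fin.ext_iff, Nat.lt_succ_iff.1 i.isLt]
  · refine onCycle_of_separates _ (spine_separates _) ?_
    simp

theorem reachable_along_leg {G : SimpleGraph (Fin (m + 1) × Fin (m + 1))} (c : Fin (m + 1))
    (r : Fin m) (h : ∀ i : Fin (r + 1), G.Adj ((Fin.castLE r.isLt i).castSucc, c)
      ((Fin.castLE r.isLt i).succ, c)) :
    G.Reachable (0, c) (r.succ, c) := by
  have := reachable_zero_last_of_adj (G := G)
    (fun i : Fin (r + 2) => (Fin.castLE (by omega) i, c))
    fun t => by convert h t using 3 <;> ext <;> simp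
  convert this using 2 <;> ext <;> simp

theorem mem_range_fundamentalCycle_of_onCycle {q : Fin m × Fin m}
    {e : Sym2 (Fin (m + 1) × Fin (m + 1))}
    (he : onCycle (centipede (m + 1)) e (chord q)) : e ∈ Set.range (fundamentalCycle q) := by
  by_contra hne
  set H := fromEdgeSet (Set.range (fundamentalCycle q))
  have hle : H ≤ (centipede (m + 1)).deleteEdges {e} :=
    fromEdgeSet_le_deleteEdges (Set.range_subset_iff.2 (fundamentalCycle_mem_edgeSet q)) hne
  have hadj : ∀ z u v, fundamentalCycle q z = s(u, v) → u ≠ v → H.Adj u v :=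
    fun z u v hz huv => (fromEdgeSet_adj _).2 ⟨⟨z, hz⟩, huv⟩
  have hleft : H.Reachable (0, q.2.castSucc) (q.1.succ, q.2.castSucc) :=
    reachable_along_leg _ _ fun i => hadj (.inl i) _ _ rfl (by simp [Prod.ext_iff, Fin.ext_iff])
  have hright : H.Reachable (0, q.2.succ) (q.1.succ, q.2.succ) :=
    reachable_along_leg _ _ fun i =>
      hadj (.inr (.inl i)) _ _ rfl (by simp [Prod.ext_iff, Fin.ext_iff])
  have hspine : H.Adj (0, q.2.castSucc) (0, q.2.succ) :=
    hadj (.inr (.inr ())) _ _ rfl (by simp [Prod.ext_iff, Fin.ext_iff])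
  exact onCycle_mk_iff.1 he ((hleft.symm.trans hspine.reachable).trans hright |>.mono hle)

theorem chordDegree_chord (q : Fin m × Fin m) :
    chordDegree (centipede (m + 1)) (chord q) = 2 * q.1 + 3 := by
  have hcycle :
      {e | e ∈ (centipede (m + 1)).edgeSet ∧ onCycle (centipede (m + 1)) e (chord q)} =
        Set.range (fundamentalCycle q) := by
    ext e
    refine ⟨fun he => mem_range_fundamentalCycle_of_onCycle he.2, ?_⟩
    rintro ⟨z, rfl⟩
    exact ⟨fundamentalCycle_mem_edgeSet q z, onCycle_fundamentalCycle q z⟩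
  rw [chordDegree, hcycle, Set.ncard_range_of_injective (fundamentalCycle_injective q)]
  simp
  ring

theorem chord_injective : Function.Injective (chord (m := m)) := by
  rintro ⟨r, k⟩ ⟨r', k'⟩ h
  simp only [chord, Sym2.eq_iff, Prod.ext_iff, Fin.ext_iff, Fin.val_succ, Fin.val_castSucc] at h ⊢
  omega

theorem edgeSet_gridGraph_diff_centipede :
    (gridGraph (m + 1)).edgeSet \ (centipede (m + 1)).edgeSet = Set.range (chord (m := m)) := by
  ext e
  induction e using Sym2.ind with
  | _ u v =>
    simp only [Set.mem_sdiff, mem_edgeSet, Set.mem_range, gridGraph, boxProd_adj, pathGraph_adj,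
      centipede, chord, Sym2.eq_iff, Prod.ext_iff, Fin.ext_iff, Fin.val_succ, Fin.val_castSucc]
    constructor
    · rintro ⟨hgrid, hnot⟩
      have hu := u.2.isLt
      refine ⟨(⟨u.1 - 1, by omega⟩, ⟨min u.2 v.2, by omega⟩), ?_⟩
      simp only
      omega
    · rintro ⟨⟨r, k⟩, hq⟩
      omega

theorem degreeMass_centipede (d : ℕ) :
    degreeMass (gridGraph (m + 1)) (centipede (m + 1)) d =
      if Odd d ∧ 3 ≤ d ∧ d ≤ 2 * m + 1 then 1 / (m : ℝ) else 0 := by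
  have hchords : {c | c ∈ Set.range (chord (m := m)) ∧ chordDegree (centipede (m + 1)) c = d} =
      chord '' {q | 2 * q.1 + 3 = d} := by
    ext c
    simp only [Set.mem_ofPred_eq, Set.mem_range, Set.mem_image]
    constructor
    · rintro ⟨⟨q, rfl⟩, hq⟩
      exact ⟨q, (chordDegree_chord q).symm.trans hq, rfl⟩
    · rintro ⟨q, hq, rfl⟩
      exact ⟨⟨q, rfl⟩, (chordDegree_chord q).trans hq⟩
  rw [degreeMass, edgeSet_gridGraph_diff_centipede, hchords,
    Set.ncard_image_of_injective _ chord_injective, ncard_setOf_two_mul_fst_add_three_eq,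
    Set.ncard_range_of_injective chord_injective]
  split_ifs
  · simp [div_self_mul_self']
  · simp

end Centipede

theorem tendsto_ite_one_div_natCast_sub_one (P : ℕ → Prop) [DecidablePred P] :
    Tendsto (fun n : ℕ => if P n then 1 / ((n : ℝ) - 1) else 0) atTop (nhds 0) := by
  have hinv : Tendsto (fun n : ℕ => 1 / ((n : ℝ) - 1)) atTop (nhds 0) := by
    simpa only [one_div, sub_eq_add_neg, Function.comp_def] using tendsto_inv_atTop_zero.comp
      (tendsto_atTop_add_const_right _ (-1) tendsto_natCast_atTop_atTop)
  refine squeeze_zero' ?_ ?_ hinv <;> filter_upwards [eventually_ge_atTop 1] with n hn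
  all_goals split_ifs <;> simp [hn]

/-- For the centipede spanning tree of the `n`-by-`n` grid (`n ≥ 3`), the
degree-mass function is `1/(n-1)` on each odd `d` with `3 ≤ d ≤ 2n-1` and `0`
otherwise; hence each `p n d → 0` as `n → ∞`, and the associated power series
of the centipede family is `f(x) = 1 + x`. -/
theorem stmt_16 (p : ℕ → ℕ → ℝ)
    (hp : ∀ n, p n = degreeMass (gridGraph n) (centipede n)) :
    (∀ n, 3 ≤ n → ∀ d : ℕ,
        p n d = if Odd d ∧ 3 ≤ d ∧ d ≤ 2 * n - 1 then (1 : ℝ) / (n - 1) else 0) ∧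
      (∀ d : ℕ, Tendsto (fun n : ℕ => p n d) atTop (nhds 0)) ∧
      (∀ pinf : ℕ → ℝ,
        (∀ d : ℕ, Tendsto (fun n : ℕ => p n d) atTop (nhds (pinf d))) →
        ∀ x ∈ Icc (0 : ℝ) 1, 1 + x - ∑' d : ℕ, pinf d * (1 - x) ^ d = 1 + x) := by
  have hmass : ∀ n, 3 ≤ n → ∀ d : ℕ,
      p n d = if Odd d ∧ 3 ≤ d ∧ d ≤ 2 * n - 1 then (1 : ℝ) / (n - 1) else 0 := by
    intro n hn d
    obtain ⟨m, rfl⟩ : ∃ m, n = m + 1 := ⟨n - 1, by omega⟩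
    rw [hp, Centipede.degreeMass_centipede, show 2 * (m + 1) - 1 = 2 * m + 1 by omega]
    push_cast
    rw [add_sub_cancel_right]
  have hlim : ∀ d : ℕ, Tendsto (fun n : ℕ => p n d) atTop (nhds 0) := fun d =>
    (tendsto_ite_one_div_natCast_sub_one _).congr' <|
      (eventually_ge_atTop 3).mono fun n hn => (hmass n hn d).symm
  refine ⟨hmass, hlim, fun pinf hpinf x _ => ?_⟩
  have hzero : pinf = 0 := funext fun d => tendsto_nhds_unique (hpinf d) (hlim d)
  simp [hzero]
end
end
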